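/- arXiv:2210.06017 — 5 statements merged into one kernel-verified Lean document; each statement's English description precedes it below -/
import Mathlib

section
/- Let S be a monoid, T a submonoid of S, and d an element of S that commutes with every element of T (d * t = t * d for all t ∈ T). Suppose S is generated by T together with d, i.e., Submonoid.closure (↑T ∪ {d}) = ⊤. Then every balanced identity satisfied by the monoid T holds in S as well: for every type X and all words w, w' ∈ FreeMonoid X such that the identity w ≍ w' is balanced and is satisfied by T, the identity w ≍ w' is satisfied by S. -/
/-!
Write every element of `S` as `t * d ^ n` with `t ∈ T`; since `d` commutes with `T`, a
homomorphism `φ : FreeMonoid X →* S` then factors as `φ w = ψ w * d ^ N w`, where `ψ` maps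
into `T` and `N w` adds up the exponents of the letters of `w`. The identity holds for `ψ`
because `T` satisfies it, and `N w = N w'` because the identity is balanced.
-/

/-- A monoid `S` satisfies the identity `w ≍ w'` if every monoid homomorphism
from the free monoid into `S` equalizes `w` and `w'`. -/
def SatisfiesId (S : Type*) [Monoid S] {X : Type*} (w w' : FreeMonoid X) : Prop :=
  ∀ φ : FreeMonoid X →* S, φ w = φ w'

/-- The identity `w ≍ w'` is balanced if every letter occurs the same number of
times in `w` and in `w'`. -/
def BalancedId {X : Type*} [DecidableEq X] (w w' : FreeMonoid X) : Prop :=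
  ∀ x : X, (FreeMonoid.toList w).count x = (FreeMonoid.toList w').count x

theorem BalancedId.perm {X : Type*} [DecidableEq X] {w w' : FreeMonoid X}
    (h : BalancedId w w') : w.toList.Perm w'.toList :=
  List.perm_iff_count.mpr h

section CommutingElement

variable {S : Type*} [Monoid S] {T : Submonoid S} {d : S}

theorem Submonoid.exists_mem_eq_mul_pow_of_mem_closure_union_singleton
    (hcomm : ∀ t ∈ T, d * t = t * d) {s : S} (hs : s ∈ closure ((T : Set S) ∪ {d})) :
    ∃ t ∈ T, ∃ n : ℕ, s = t * d ^ n := by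
  induction hs using closure_induction with
  | mem x hx =>
    rcases hx with hx | rfl
    · exact ⟨x, hx, 0, by simp⟩
    · exact ⟨1, T.one_mem, 1, by simp⟩
  | one => exact ⟨1, T.one_mem, 0, by simp⟩
  | mul _ _ _ _ ha hb =>
    obtain ⟨t₁, ht₁, n₁, rfl⟩ := ha
    obtain ⟨t₂, ht₂, n₂, rfl⟩ := hb
    refine ⟨t₁ * t₂, T.mul_mem ht₁ ht₂, n₁ + n₂, ?_⟩
    rw [pow_add, mul_assoc, ← mul_assoc (d ^ n₁), (Commute.pow_left (hcomm t₂ ht₂) n₁).eq]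
    simp only [mul_assoc]

theorem FreeMonoid.hom_eq_lift_mul_pow_sum (hcomm : ∀ t ∈ T, d * t = t * d)
    {X : Type*} (φ : FreeMonoid X →* S) (t : X → T) (n : X → ℕ)
    (hφ : ∀ x, φ (of x) = t x * d ^ n x) (w : FreeMonoid X) :
    φ w = lift t w * d ^ (w.toList.map n).sum := by
  induction w using FreeMonoid.inductionOn with
  | one => simp
  | of x => simp [hφ]
  | mul a b ha hb =>
    rw [map_mul, ha, hb, toList_mul, List.map_append, List.sum_append, pow_add, map_mul,
      Submonoid.coe_mul, mul_assoc, ← mul_assoc (d ^ _),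
      (Commute.pow_left (hcomm _ (lift t b).2) _).eq]
    simp only [mul_assoc]

end CommutingElement

/-- If `S` is generated by a submonoid `T` together with an element `d` commuting
with every element of `T`, then every balanced identity satisfied by `T` holds in `S`. -/
theorem balanced_identities_lift {S : Type*} [Monoid S] (T : Submonoid S) (d : S)
    (hcomm : ∀ t ∈ T, d * t = t * d)
    (hgen : Submonoid.closure ((T : Set S) ∪ {d}) = ⊤)
    {X : Type*} [DecidableEq X] (w w' : FreeMonoid X)
    (hbal : BalancedId w w')
    (hT : SatisfiesId T w w') :
    SatisfiesId S w w' := by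
  intro φ
  have hdecomp (x : X) : ∃ t : T, ∃ n : ℕ, φ (.of x) = t * d ^ n := by
    obtain ⟨t, ht, n, h⟩ := Submonoid.exists_mem_eq_mul_pow_of_mem_closure_union_singleton
      hcomm (hgen ▸ Submonoid.mem_top (φ (.of x)))
    exact ⟨⟨t, ht⟩, n, h⟩
  choose t n hφ using hdecomp
  rw [FreeMonoid.hom_eq_lift_mul_pow_sum hcomm φ t n hφ,
    FreeMonoid.hom_eq_lift_mul_pow_sum hcomm φ t n hφ, hT, (hbal.perm.map n).sum_eq]
end

section
/- Let S be a monoid, T a submonoid of S, and d an element of S that commutes with every element of T, and suppose S is generated by T together with d, i.e., Submonoid.closure (↑T ∪ {d}) = ⊤. If T contains an element t of infinite order (the map n ↦ t^n from ℕ to T is injective, so ⟨t⟩ is an infinite cyclic submonoid), then T and S are equationally equivalent. -/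
namespace SatisfiesId

variable {M N : Type*} [Monoid M] [Monoid N] {X : Type*} {w w' : FreeMonoid X}

theorem of_injective (f : M →* N) (hf : Function.Injective f) (h : SatisfiesId N w w') :
    SatisfiesId M w w' :=
  fun φ ↦ hf (h (f.comp φ))

/-- Free monoids are projective: every homomorphism into `N` lifts through a surjection. -/
theorem of_surjective (f : M →* N) (hf : Function.Surjective f) (h : SatisfiesId M w w') :
    SatisfiesId N w w' := by
  intro φ
  have hlift : f.comp (FreeMonoid.lift (Function.surjInv hf ∘ φ ∘ FreeMonoid.of)) = φ :=
    FreeMonoid.hom_eq fun x ↦ by simp [Function.surjInv_eq hf]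
  rw [← hlift, MonoidHom.comp_apply, MonoidHom.comp_apply,
    h (FreeMonoid.lift (Function.surjInv hf ∘ φ ∘ FreeMonoid.of))]

theorem prod (hM : SatisfiesId M w w') (hN : SatisfiesId N w w') :
    SatisfiesId (M × N) w w' :=
  fun φ ↦ Prod.ext (hM ((MonoidHom.fst M N).comp φ)) (hN ((MonoidHom.snd M N).comp φ))

end SatisfiesId

theorem powersHom_injective {M : Type*} [Monoid M] {x : M}
    (hx : Function.Injective fun n : ℕ ↦ x ^ n) : Function.Injective (powersHom M x) :=
  fun _ _ h ↦ Multiplicative.toAdd.injective (hx h)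

def Submonoid.mulPowersHom {S : Type*} [Monoid S] (T : Submonoid S) (d : S)
    (hcomm : ∀ u ∈ T, Commute u d) : T × Multiplicative ℕ →* S :=
  T.subtype.noncommCoprod (powersHom S d) fun u _ ↦ (hcomm u u.2).pow_right _

@[simp]
theorem Submonoid.mulPowersHom_apply {S : Type*} [Monoid S] (T : Submonoid S) (d : S)
    (hcomm : ∀ u ∈ T, Commute u d) (p : T × Multiplicative ℕ) :
    T.mulPowersHom d hcomm p = p.1 * d ^ p.2.toAdd :=
  rfl

theorem Submonoid.mulPowersHom_surjective {S : Type*} [Monoid S] (T : Submonoid S) (d : S)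
    (hcomm : ∀ u ∈ T, Commute u d) (hgen : Submonoid.closure ((T : Set S) ∪ {d}) = ⊤) :
    Function.Surjective (T.mulPowersHom d hcomm) := by
  rw [← MonoidHom.mrange_eq_top, eq_top_iff, ← hgen, Submonoid.closure_le]
  rintro s (hs | rfl)
  · exact ⟨(⟨s, hs⟩, 1), by simp⟩
  · exact ⟨(1, Multiplicative.ofAdd 1), by simp⟩

/-- If `S` is generated by a submonoid `T` together with an element `d` commuting
with every element of `T`, and `T` contains an element of infinite order, then
`T` and `S` are equationally equivalent. -/
theorem equationally_equivalent_of_localization {S : Type*} [Monoid S] (T : Submonoid S) (d : S)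
    (hcomm : ∀ t ∈ T, d * t = t * d)
    (hgen : Submonoid.closure ((T : Set S) ∪ {d}) = ⊤)
    (t : T) (ht : Function.Injective fun n : ℕ => t ^ n) :
    ∀ (X : Type*) (w w' : FreeMonoid X),
      SatisfiesId T w w' ↔ SatisfiesId S w w' := by
  intro X w w'
  refine ⟨fun hT ↦ ?_, SatisfiesId.of_injective T.subtype Subtype.val_injective⟩
  have hℕ : SatisfiesId (Multiplicative ℕ) w w' :=
    hT.of_injective (powersHom T t) (powersHom_injective ht)
  exact (hT.prod hℕ).of_surjective _
    (T.mulPowersHom_surjective d (fun u hu ↦ (hcomm u hu).symm) hgen)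
end

section
/- Let z denote the element of the plactic monoid M represented by the word cba. Then z is cancellable in M: for all w, v ∈ M, if z * w = z * v then w = v. -/
namespace Plactic

/-- The generator `a`. -/
def a : FreeMonoid (Fin 3) := FreeMonoid.of 0
/-- The generator `b`. -/
def b : FreeMonoid (Fin 3) := FreeMonoid.of 1
/-- The generator `c`. -/
def c : FreeMonoid (Fin 3) := FreeMonoid.of 2

/-- The eight Knuth relations on three generators. -/
inductive KnuthRel : FreeMonoid (Fin 3) → FreeMonoid (Fin 3) → Prop
  | aba : KnuthRel (a * b * a) (b * a * a)
  | bab : KnuthRel (b * a * b) (b * b * a)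
  | aca : KnuthRel (a * c * a) (c * a * a)
  | cac : KnuthRel (c * a * c) (c * c * a)
  | cbb : KnuthRel (c * b * b) (b * c * b)
  | cbc : KnuthRel (c * b * c) (c * c * b)
  | bac : KnuthRel (b * a * c) (b * c * a)
  | acb : KnuthRel (a * c * b) (c * a * b)

/-- The plactic congruence: the congruence generated by the Knuth relations. -/
def placticCon : Con (FreeMonoid (Fin 3)) := conGen KnuthRel

/-- The plactic monoid with three generators. -/
abbrev M := placticCon.Quotient

/-- The natural projection from the free monoid onto the plactic monoid. -/
def mk : FreeMonoid (Fin 3) →* M := placticCon.mk'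

/-- The congruence on `M` generated by the pair `(ac, ca)`. -/
def con1 : Con M := conGen (fun x y => x = mk (a * c) ∧ y = mk (c * a))

/-- `N1 = M/(ac = ca)`. -/
abbrev N1 := con1.Quotient

/-- The congruence on `M` generated by the pair `(bacb, cbab)`. -/
def con2 : Con M := conGen (fun x y => x = mk (b * a * c * b) ∧ y = mk (c * b * a * b))

/-- The grammic monoid `N2 = M/(bacb = cbab)`. -/
abbrev N2 := con2.Quotient

/-! Every element of `M` is the reading word of the tableau obtained by Schensted row insertion of
any representing word, and insertion is invariant under the Knuth relations, so tableaux classify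
the elements of `M`. Inserting the column `cba` into the empty tableau gives a full column, and
inserting further letters into a tableau with a full first column never touches that column:
the result is the insertion tableau of the remaining letters with the column prepended. Removing
the column therefore recovers `w` from `z * w`. -/

section Monoid

variable {G : Type*} [Monoid G]

theorem pow_succ_mul_eq_of_mul_mul_eq {x y : G} (h : x * y * x = x * x * y) (n : ℕ) :
    x ^ (n + 1) * y = x * y * x ^ n := by
  induction n with
  | zero => simp
  | succ n ih =>
    rw [pow_succ', mul_assoc, ih, ← mul_assoc, ← mul_assoc, ← h, pow_succ', mul_assoc _ x]

theorem pow_mul_mul_eq_of_mul_mul_eq {x y : G} (h : y * x * y = x * y * y) (n : ℕ) :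
    y ^ n * (x * y) = x * y ^ (n + 1) := by
  induction n with
  | zero => simp
  | succ n ih =>
    calc y ^ (n + 1) * (x * y) = y * x * y ^ (n + 1) := by
          rw [pow_succ', mul_assoc, ih, mul_assoc, ← pow_succ']
      _ = y * x * y * y ^ n := by rw [pow_succ', mul_assoc (y * x)]
      _ = x * y ^ (n + 1 + 1) := by rw [h, pow_succ' y (n + 1), pow_succ']; simp only [mul_assoc]

theorem mul_mul_mul_eq_of_mul_eq {r₁ r₂ r₃ r₁' x : G} (h₁ : r₁ * x = r₁') :
    r₃ * r₂ * r₁ * x = r₃ * r₂ * r₁' := by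
  rw [mul_assoc, h₁]

theorem mul_mul_mul_eq_of_bump {r₁ r₂ r₃ r₁' r₂' x y : G} (h₁ : r₁ * x = y * r₁')
    (h₂ : r₂ * y = r₂') : r₃ * r₂ * r₁ * x = r₃ * r₂' * r₁' := by
  rw [mul_assoc, h₁, ← mul_assoc, mul_assoc r₃, h₂]

theorem mul_mul_mul_eq_of_bumps {r₁ r₂ r₃ r₁' r₂' r₃' x y z : G} (h₁ : r₁ * x = y * r₁')
    (h₂ : r₂ * y = z * r₂') (h₃ : r₃ * z = r₃') : r₃ * r₂ * r₁ * x = r₃' * r₂' * r₁' := by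
  rw [mul_mul_mul_eq_of_bump h₁ h₂, ← mul_assoc r₃, h₃]

end Monoid

theorem mk_surjective : Function.Surjective mk := placticCon.mk'_surjective

theorem mk_eq_of_knuthRel {x y : FreeMonoid (Fin 3)} (h : KnuthRel x y) : mk x = mk y :=
  placticCon.eq.2 (ConGen.Rel.of x y h)

theorem mk_aba : mk a * mk b * mk a = mk b * mk a * mk a := by
  simpa only [map_mul] using mk_eq_of_knuthRel .aba

theorem mk_bab : mk b * mk a * mk b = mk b * mk b * mk a := by
  simpa only [map_mul] using mk_eq_of_knuthRel .bab

theorem mk_aca : mk a * mk c * mk a = mk c * mk a * mk a := by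
  simpa only [map_mul] using mk_eq_of_knuthRel .aca

theorem mk_cac : mk c * mk a * mk c = mk c * mk c * mk a := by
  simpa only [map_mul] using mk_eq_of_knuthRel .cac

theorem mk_cbb : mk c * mk b * mk b = mk b * mk c * mk b := by
  simpa only [map_mul] using mk_eq_of_knuthRel .cbb

theorem mk_cbc : mk c * mk b * mk c = mk c * mk c * mk b := by
  simpa only [map_mul] using mk_eq_of_knuthRel .cbc

theorem mk_bac : mk b * mk a * mk c = mk b * mk c * mk a := by
  simpa only [map_mul] using mk_eq_of_knuthRel .bac

theorem mk_acb : mk a * mk c * mk b = mk c * mk a * mk b := by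
  simpa only [map_mul] using mk_eq_of_knuthRel .acb

def row (p q r : ℕ) : M := mk a ^ p * mk b ^ q * mk c ^ r

-- Row insertion inside `M`: a row times a letter is the bumped letter (if any) times the new row.

theorem row_mul_c (p q r : ℕ) : row p q r * mk c = row p q (r + 1) := by
  rw [row, row, mul_assoc, ← pow_succ]

theorem row_zero_mul_b (p q : ℕ) : row p q 0 * mk b = row p (q + 1) 0 := by
  simp only [row, pow_zero, mul_one, mul_assoc, ← pow_succ]

theorem row_zero_zero_mul_a (p : ℕ) : row p 0 0 * mk a = row (p + 1) 0 0 := by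
  simp only [row, pow_zero, mul_one, ← pow_succ]

theorem a_pow_mul_c_mul_b (p : ℕ) : mk a ^ p * (mk c * mk b) = mk c * mk a ^ p * mk b := by
  cases p with
  | zero => simp
  | succ p =>
    calc mk a ^ (p + 1) * (mk c * mk b) = mk a ^ p * (mk a * mk c * mk b) := by
          simp only [pow_succ, mul_assoc]
      _ = mk a ^ p * (mk c * mk a) * mk b := by rw [mk_acb]; simp only [mul_assoc]
      _ = mk c * mk a ^ (p + 1) * mk b := by rw [pow_mul_mul_eq_of_mul_mul_eq mk_aca]

theorem b_mul_c_pow_mul_a (r : ℕ) : mk b * mk c ^ r * mk a = mk b * mk a * mk c ^ r := by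
  cases r with
  | zero => simp
  | succ r =>
    calc mk b * mk c ^ (r + 1) * mk a = mk b * (mk c ^ (r + 1) * mk a) := mul_assoc ..
      _ = mk b * mk c * mk a * mk c ^ r := by
          rw [pow_succ_mul_eq_of_mul_mul_eq mk_cac]; simp only [mul_assoc]
      _ = mk b * mk a * (mk c * mk c ^ r) := by rw [← mk_bac]; simp only [mul_assoc]
      _ = mk b * mk a * mk c ^ (r + 1) := by rw [← pow_succ']

theorem row_succ_mul_b (p q r : ℕ) : row p q (r + 1) * mk b = mk c * row p (q + 1) r :=
  calc row p q (r + 1) * mk b = mk a ^ p * mk b ^ q * (mk c ^ (r + 1) * mk b) := by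
        rw [row, mul_assoc]
    _ = mk a ^ p * (mk b ^ q * (mk c * mk b)) * mk c ^ r := by
        rw [pow_succ_mul_eq_of_mul_mul_eq mk_cbc]; simp only [mul_assoc]
    _ = mk a ^ p * (mk c * mk b) * mk b ^ q * mk c ^ r := by
        rw [pow_mul_mul_eq_of_mul_mul_eq mk_cbb.symm, pow_succ']; simp only [mul_assoc]
    _ = mk c * row p (q + 1) r := by
        rw [a_pow_mul_c_mul_b, row, pow_succ']; simp only [mul_assoc]

theorem row_zero_succ_mul_a (p r : ℕ) : row p 0 (r + 1) * mk a = mk c * row (p + 1) 0 r :=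
  calc row p 0 (r + 1) * mk a = mk a ^ p * (mk c ^ (r + 1) * mk a) := by
        rw [row, pow_zero, mul_one, mul_assoc]
    _ = mk a ^ p * (mk c * mk a) * mk c ^ r := by
        rw [pow_succ_mul_eq_of_mul_mul_eq mk_cac]; simp only [mul_assoc]
    _ = mk c * row (p + 1) 0 r := by
        rw [pow_mul_mul_eq_of_mul_mul_eq mk_aca, row, pow_zero, mul_one, mul_assoc]

theorem row_succ_mul_a (p q r : ℕ) : row p (q + 1) r * mk a = mk b * row (p + 1) q r :=
  calc row p (q + 1) r * mk a = mk a ^ p * mk b ^ q * (mk b * mk c ^ r * mk a) := by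
        rw [row, pow_succ]; simp only [mul_assoc]
    _ = mk a ^ p * (mk b ^ (q + 1) * mk a) * mk c ^ r := by
        rw [b_mul_c_pow_mul_a, pow_succ]; simp only [mul_assoc]
    _ = mk a ^ p * (mk b * mk a) * mk b ^ q * mk c ^ r := by
        rw [pow_succ_mul_eq_of_mul_mul_eq mk_bab]; simp only [mul_assoc]
    _ = mk b * row (p + 1) q r := by
        rw [pow_mul_mul_eq_of_mul_mul_eq mk_aba, row]; simp only [mul_assoc]

/-- A tableau over `a < b < c` with rows `a^p b^q c^r`, `b^s c^t` and `c^u`; the shape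
conditions are not imposed. -/
structure Tableau where
  ofRows ::
  (p q r s t u : ℕ)

namespace Tableau

def empty : Tableau := ⟨0, 0, 0, 0, 0, 0⟩

/-- Schensted row insertion of a letter. -/
def insert : Tableau → Fin 3 → Tableau
  | ⟨p, q, r, s, t, u⟩, 2 => ⟨p, q, r + 1, s, t, u⟩
  | ⟨p, q + 1, r, s, t + 1, u⟩, 0 => ⟨p + 1, q, r, s + 1, t, u + 1⟩
  | ⟨p, q + 1, r, s, 0, u⟩, 0 => ⟨p + 1, q, r, s + 1, 0, u⟩
  | ⟨p, 0, r + 1, s, t, u⟩, 0 => ⟨p + 1, 0, r, s, t + 1, u⟩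
  | ⟨p, 0, 0, s, t, u⟩, 0 => ⟨p + 1, 0, 0, s, t, u⟩
  | ⟨p, q, r + 1, s, t, u⟩, 1 => ⟨p, q + 1, r, s, t + 1, u⟩
  | ⟨p, q, 0, s, t, u⟩, 1 => ⟨p, q + 1, 0, s, t, u⟩

def insertWord (T : Tableau) (w : FreeMonoid (Fin 3)) : Tableau := w.toList.foldl insert T

theorem insertWord_mul (T : Tableau) (v w : FreeMonoid (Fin 3)) :
    T.insertWord (v * w) = (T.insertWord v).insertWord w := by
  simp only [insertWord, FreeMonoid.toList_mul, List.foldl_append]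

theorem insertWord_eq_of_knuthRel {v w : FreeMonoid (Fin 3)} (h : KnuthRel v w) (T : Tableau) :
    T.insertWord v = T.insertWord w := by
  obtain ⟨p, q, r, s, t, u⟩ := T
  -- three insertions only see whether each of `q`, `r`, `t` is `0`, `1`, `2` or larger
  cases h <;>
    rcases q with _ | _ | _ | q <;> rcases r with _ | _ | _ | r <;>
      rcases t with _ | _ | _ | t <;> rfl

theorem insertWord_eq_of_placticCon {v w : FreeMonoid (Fin 3)} (h : placticCon v w)
    (T : Tableau) : T.insertWord v = T.insertWord w := by
  induction h generalizing T with
  | of _ _ h => exact insertWord_eq_of_knuthRel h T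
  | refl => rfl
  | symm _ ih => exact (ih T).symm
  | trans _ _ ih₁ ih₂ => exact (ih₁ T).trans (ih₂ T)
  | mul _ _ ih₁ ih₂ => rw [insertWord_mul, insertWord_mul, ih₁, ih₂]

/-- The row reading word, shortest row first. -/
def read (T : Tableau) : M := row 0 0 T.u * row 0 T.s T.t * row T.p T.q T.r

theorem read_insert : ∀ (T : Tableau) (x : Fin 3), (T.insert x).read = T.read * mk (.of x)
  | ⟨p, q, r, _, _, _⟩, 2 => (mul_mul_mul_eq_of_mul_eq (row_mul_c p q r)).symm
  | ⟨p, q + 1, r, s, t + 1, u⟩, 0 => (mul_mul_mul_eq_of_bumps (row_succ_mul_a p q r)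
      (row_succ_mul_b 0 s t) (row_mul_c 0 0 u)).symm
  | ⟨p, q + 1, r, s, 0, _⟩, 0 =>
    (mul_mul_mul_eq_of_bump (row_succ_mul_a p q r) (row_zero_mul_b 0 s)).symm
  | ⟨p, 0, r + 1, s, t, _⟩, 0 =>
    (mul_mul_mul_eq_of_bump (row_zero_succ_mul_a p r) (row_mul_c 0 s t)).symm
  | ⟨p, 0, 0, _, _, _⟩, 0 => (mul_mul_mul_eq_of_mul_eq (row_zero_zero_mul_a p)).symm
  | ⟨p, q, r + 1, s, t, _⟩, 1 =>
    (mul_mul_mul_eq_of_bump (row_succ_mul_b p q r) (row_mul_c 0 s t)).symm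
  | ⟨p, q, 0, _, _, _⟩, 1 => (mul_mul_mul_eq_of_mul_eq (row_zero_mul_b p q)).symm

theorem read_insertWord (T : Tableau) (w : FreeMonoid (Fin 3)) :
    (T.insertWord w).read = T.read * mk w := by
  induction w using FreeMonoid.inductionOn' generalizing T with
  | one => rw [map_one, mul_one]; rfl
  | of_mul x w ih =>
    rw [map_mul, ← mul_assoc, ← read_insert, ← ih]
    rfl

def addColumn (T : Tableau) : Tableau := ⟨T.p + 1, T.q, T.r, T.s + 1, T.t, T.u + 1⟩

theorem addColumn_injective : Function.Injective addColumn := by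
  rintro ⟨⟩ ⟨⟩ h
  simp only [addColumn, ofRows.injEq, Nat.add_right_cancel_iff] at h ⊢
  exact h

theorem insert_addColumn (T : Tableau) (x : Fin 3) :
    (addColumn T).insert x = addColumn (T.insert x) := by
  obtain ⟨p, q, r, s, t, u⟩ := T
  fin_cases x <;> rcases q with _ | q <;> rcases r with _ | r <;> rcases t with _ | t <;> rfl

theorem insertWord_addColumn (T : Tableau) (w : FreeMonoid (Fin 3)) :
    (addColumn T).insertWord w = addColumn (T.insertWord w) := by
  induction w using FreeMonoid.inductionOn' generalizing T with
  | one => rfl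
  | of_mul x w ih => exact (congrArg (insertWord · w) (insert_addColumn T x)).trans (ih _)

theorem empty_insertWord_cba_mul (w : FreeMonoid (Fin 3)) :
    empty.insertWord (c * b * a * w) = addColumn (empty.insertWord w) := by
  rw [insertWord_mul]
  exact insertWord_addColumn empty w

end Tableau

theorem mk_eq_read_insertWord (w : FreeMonoid (Fin 3)) :
    mk w = (Tableau.empty.insertWord w).read := by
  rw [Tableau.read_insertWord]
  simp [Tableau.empty, Tableau.read, row]

theorem mk_eq_mk_iff {v w : FreeMonoid (Fin 3)} :
    mk v = mk w ↔ Tableau.empty.insertWord v = Tableau.empty.insertWord w := by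
  refine ⟨fun h => Tableau.insertWord_eq_of_placticCon (placticCon.eq.1 h) _, fun h => ?_⟩
  rw [mk_eq_read_insertWord, mk_eq_read_insertWord, h]

/-- The element `z = cba` is (left) cancellable in the plactic monoid `M`. -/
theorem z_cancellable :
    ∀ w v : M, mk (c * b * a) * w = mk (c * b * a) * v → w = v := by
  intro w v h
  obtain ⟨x, rfl⟩ := mk_surjective w
  obtain ⟨y, rfl⟩ := mk_surjective v
  rw [← map_mul, ← map_mul, mk_eq_mk_iff, Tableau.empty_insertWord_cba_mul,
    Tableau.empty_insertWord_cba_mul] at h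
  exact mk_eq_mk_iff.2 (Tableau.addColumn_injective h)

end Plactic
end

section
/- Every non-identity element of the monoid N1 has infinite order: for every u ∈ N1 with u ≠ 1, the map n ↦ u^n from ℕ to N1 is injective (the submonoid generated by u is infinite cyclic). -/
/-
All defining relations of `N1` are homogeneous, so word length descends to a monoid
homomorphism `N1 → ℕ` that vanishes only at `1`; then `u ≠ 1` has positive degree `d`,
and `u ^ n` has degree `n * d`, which determines `n`.
-/

theorem Monoid.injective_pow_of_map_ne_one {M : Type*} [Monoid M] (φ : M →* Multiplicative ℕ)
    {u : M} (hu : φ u ≠ 1) : Function.Injective (u ^ · : ℕ → M) := by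
  intro i j hij
  have hdeg : i * (φ u).toAdd = j * (φ u).toAdd := by
    simpa only [map_pow, toAdd_pow, smul_eq_mul] using congrArg (fun x => (φ x).toAdd) hij
  exact Nat.eq_of_mul_eq_mul_right (Nat.pos_of_ne_zero hu) hdeg

namespace FreeMonoid

variable {α : Type*}

def lengthHom : FreeMonoid α →* Multiplicative ℕ where
  toFun w := .ofAdd w.length
  map_one' := rfl
  map_mul' v w := by rw [length_mul, ofAdd_add]

end FreeMonoid

namespace Plactic

open FreeMonoid

theorem placticCon_le_ker_lengthHom : placticCon ≤ Con.ker lengthHom :=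
  Con.conGen_le.mpr fun _ _ h => by cases h <;> rfl

def M.degree : M →* Multiplicative ℕ := placticCon.lift lengthHom placticCon_le_ker_lengthHom

theorem con1_le_ker_degree : con1 ≤ Con.ker M.degree :=
  Con.conGen_le.mpr fun _ _ ⟨hx, hy⟩ => by subst hx hy; rfl

def N1.degree : N1 →* Multiplicative ℕ := con1.lift M.degree con1_le_ker_degree

theorem N1.degree_eq_one_iff (u : N1) : N1.degree u = 1 ↔ u = 1 := by
  obtain ⟨m, rfl⟩ := con1.mk'_surjective u
  obtain ⟨w, rfl⟩ := placticCon.mk'_surjective m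
  refine ⟨fun h => ?_, fun h => h ▸ map_one _⟩
  rw [show w = 1 from length_eq_zero.mp h]
  rfl

/-- Every non-identity element of `N1` has infinite order. -/
theorem N1_infinite_order (u : N1) (hu : u ≠ 1) :
    Function.Injective fun n : ℕ => u ^ n :=
  Monoid.injective_pow_of_map_ne_one N1.degree (mt (N1.degree_eq_one_iff u).mp hu)

end Plactic
end

section
/- Every non-identity element of the grammic monoid N2 has infinite order: for every u ∈ N2 with u ≠ 1, the map n ↦ u^n from ℕ to N2 is injective (the submonoid generated by u is infinite cyclic). -/
namespace Plactic

/-!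
The Knuth relations and `bacb = cbab` are homogeneous, so word length descends to a monoid
morphism `N2 → (ℕ, +)`, which vanishes only at `1`. A non-identity `u` has positive length `ℓ`,
and `u ^ n` has length `n * ℓ`, so the powers of `u` are pairwise distinct.
-/

theorem _root_.injective_pow_of_map_ne_one {G H : Type*} [Monoid G] [LeftCancelMonoid H]
    [IsMulTorsionFree H] (f : G →* H) {u : G} (hu : f u ≠ 1) :
    Function.Injective fun n : ℕ => u ^ n := by
  have hfu : Function.Injective fun n : ℕ => f u ^ n :=
    injective_pow_iff_not_isOfFinOrder.2 (mt IsOfFinOrder.eq_one' hu)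
  exact .of_comp (f := f) (by simpa only [Function.comp_def, map_pow] using hfu)

def _root_.FreeMonoid.lengthHom_s9 (α : Type*) : FreeMonoid α →* Multiplicative ℕ where
  toFun w := Multiplicative.ofAdd w.length
  map_one' := rfl
  map_mul' := FreeMonoid.length_mul

def placticLength : M →* Multiplicative ℕ :=
  Con.lift _ (FreeMonoid.lengthHom_s9 _)
    (Con.conGen_le.2 (by rintro _ _ (_ | _ | _ | _ | _ | _ | _ | _) <;> rfl))

def grammicLength : N2 →* Multiplicative ℕ :=
  Con.lift _ placticLength (Con.conGen_le.2 (by rintro _ _ ⟨rfl, rfl⟩; rfl))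

theorem grammicLength_mk (w : FreeMonoid (Fin 3)) :
    grammicLength (con2.mk' (mk w)) = Multiplicative.ofAdd w.length :=
  rfl

theorem eq_one_of_grammicLength_eq_one {u : N2} (hu : grammicLength u = 1) : u = 1 := by
  obtain ⟨x, rfl⟩ := con2.mk'_surjective u
  obtain ⟨w, rfl⟩ := placticCon.mk'_surjective x
  have hw : w = 1 :=
    FreeMonoid.length_eq_zero.1 (ofAdd_eq_one.1 ((grammicLength_mk w).symm.trans hu))
  rw [hw, map_one, map_one]

/-- Every non-identity element of the grammic monoid `N2` has infinite order. -/
theorem N2_infinite_order (u : N2) (hu : u ≠ 1) :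
    Function.Injective fun n : ℕ => u ^ n :=
  injective_pow_of_map_ne_one grammicLength (mt eq_one_of_grammicLength_eq_one hu)

end Plactic
end
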